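/- arXiv:0804.1018 — 2 statements merged into one kernel-verified Lean document; each statement's English description precedes it below -/
import Mathlib

section
/- Let d ≥ 1, let ω : ℝ^d → [0,∞) be a radial nonnegative bounded measurable weight, and let f : ℝ^d → ℂ be a radial Schwartz function. Then for every x ∈ ℝ^d, |x|^{d-1} ω(x)^{1/2} |f(x)|^2 ≤ C · ‖f‖_{L^2(ℝ^d)} · ‖ω^{1/2} ∇f‖_{L^2(ℝ^d)}, where C depends only on d and additionally ω is assumed to satisfy ω(x) ≤ C' ω(y) whenever |x| ≤ |y| (monotonicity up to constants). -/
/-!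
Write `f x = u ‖x‖`. As `u` vanishes at infinity, `‖u R‖² = -∫_R^∞ (‖u‖²)' ≤ 2 ∫_R^∞ ‖u‖ ‖u'‖`.
For `r ≥ R = ‖x‖` the monotonicity of the weight gives `R^(d-1) √(ω x) ≤ √C' r^(d-1) √(ω r)`,
so `‖x‖^(d-1) √(ω x) ‖f x‖²` is at most `2 √C' ∫_0^∞ r^(d-1) ‖u‖ √ω ‖u'‖ dr`. In polar
coordinates this is `2 √C' / (d |B₁|)` times `∫ ‖f‖ √ω ‖∇f‖`, and Cauchy–Schwarz concludes.
-/

open MeasureTheory Real Set Filter Topology Module Metric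

theorem integral_mul_le_sqrt_integral_sq_mul_sqrt_integral_sq {α : Type*} [MeasurableSpace α]
    {μ : Measure α} {f g : α → ℝ} (hf₀ : 0 ≤ᵐ[μ] f) (hg₀ : 0 ≤ᵐ[μ] g)
    (hf : MemLp f 2 μ) (hg : MemLp g 2 μ) :
    ∫ x, f x * g x ∂μ ≤ √(∫ x, f x ^ 2 ∂μ) * √(∫ x, g x ^ 2 ∂μ) := by
  have h := integral_mul_le_Lp_mul_Lq_of_nonneg Real.HolderConjugate.two_two hf₀ hg₀
    (by simpa using hf) (by simpa using hg)
  simpa [Real.sqrt_eq_rpow] using h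

namespace SchwartzMap

variable {D F G : Type*} [NormedAddCommGroup D] [NormedSpace ℝ D] [MeasurableSpace D]
  [BorelSpace D] [SecondCountableTopology D] [NormedAddCommGroup F] [NormedSpace ℝ F]
  [NormedAddCommGroup G] [NormedSpace ℝ G]

theorem integrable_norm_mul_norm (μ : Measure D) [μ.HasTemperateGrowth] (f : 𝓢(D, F))
    (g : 𝓢(D, G)) : Integrable (fun x => ‖f x‖ * ‖g x‖) μ :=
  (g.integrable (μ := μ)).norm.bdd_mul f.continuous.norm.aestronglyMeasurable
    (.of_forall fun x => by simpa using norm_le_seminorm ℝ f x)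

variable (μ : Measure D) [μ.HasTemperateGrowth] (f : 𝓢(D, F)) {ω : D → ℝ} {B : ℝ}

theorem memLp_sqrt_mul_norm_fderiv (hωm : Measurable ω) (hωB : ∀ x, ω x ≤ B) :
    MemLp (fun x => √(ω x) * ‖fderiv ℝ f x‖) 2 μ :=
  ((fderivCLM ℝ D F f).memLp 2 μ).norm.of_le_mul (c := √B)
    (hωm.sqrt.aestronglyMeasurable.mul (fderivCLM ℝ D F f).continuous.norm.aestronglyMeasurable)
    (.of_forall fun x => by
      simp only [norm_mul, Real.norm_eq_abs, abs_norm, abs_of_nonneg (sqrt_nonneg _)]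
      exact mul_le_mul_of_nonneg_right (sqrt_le_sqrt (hωB x)) (norm_nonneg _))

theorem integrable_norm_mul_sqrt_mul_norm_fderiv (hωm : Measurable ω) (hωB : ∀ x, ω x ≤ B) :
    Integrable (fun x => ‖f x‖ * (√(ω x) * ‖fderiv ℝ f x‖)) μ :=
  (f.memLp 2 μ).norm.integrable_mul (f.memLp_sqrt_mul_norm_fderiv μ hωm hωB)

theorem integral_norm_mul_sqrt_mul_norm_fderiv_le (hωm : Measurable ω) (hω₀ : ∀ x, 0 ≤ ω x)
    (hωB : ∀ x, ω x ≤ B) :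
    ∫ x, ‖f x‖ * (√(ω x) * ‖fderiv ℝ f x‖) ∂μ ≤
      √(∫ x, ‖f x‖ ^ 2 ∂μ) * √(∫ x, ω x * ‖fderiv ℝ f x‖ ^ 2 ∂μ) := by
  have h := integral_mul_le_sqrt_integral_sq_mul_sqrt_integral_sq
    (.of_forall fun x => norm_nonneg (f x)) (.of_forall fun x => by positivity)
    (f.memLp 2 μ).norm (f.memLp_sqrt_mul_norm_fderiv μ hωm hωB)
  simpa only [mul_pow, sq_sqrt (hω₀ _)] using h

end SchwartzMap

namespace SchwartzMap

variable {F : Type*} [NormedAddCommGroup F] [InnerProductSpace ℝ F]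

theorem norm_sq_le_two_mul_integral_Ioi (u : 𝓢(ℝ, F)) (R : ℝ) :
    ‖u R‖ ^ 2 ≤ 2 * ∫ r in Ioi R, ‖u r‖ * ‖deriv u r‖ := by
  have hint := (integrable_norm_mul_norm volume u (derivCLM ℝ F u)).integrableOn (s := Ioi R)
  have hinner : ∀ r, |2 * inner ℝ (u r) (deriv u r)| ≤ 2 * (‖u r‖ * ‖deriv u r‖) := fun r => by
    rw [abs_mul, abs_two]
    exact mul_le_mul_of_nonneg_left (abs_real_inner_le_norm _ _) zero_le_two
  have hψ : IntegrableOn (fun r => 2 * inner ℝ (u r) (deriv u r)) (Ioi R) :=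
    (hint.const_mul 2).mono'
      (continuous_const.mul (u.continuous.inner (derivCLM ℝ F u).continuous)).aestronglyMeasurable
      (.of_forall fun r => hinner r)
  have hlim : Tendsto (fun r => ‖u r‖ ^ 2) atTop (𝓝 0) := by
    simpa using ((u.tendsto_cocompact.mono_left atTop_le_cocompact).norm.pow 2)
  have hftc := integral_Ioi_of_hasDerivAt_of_tendsto' (fun r _ => (u.hasDerivAt r).norm_sq) hψ hlim
  calc ‖u R‖ ^ 2 = ∫ r in Ioi R, -(2 * inner ℝ (u r) (deriv u r)) := by
        rw [integral_neg, hftc]; ring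
    _ ≤ ∫ r in Ioi R, 2 * (‖u r‖ * ‖deriv u r‖) :=
        integral_mono hψ.neg (hint.const_mul 2) fun r => (neg_le_abs _).trans (hinner r)
    _ = 2 * ∫ r in Ioi R, ‖u r‖ * ‖deriv u r‖ := integral_const_mul _ _

variable {E : Type*} [NormedAddCommGroup E] [NormedSpace ℝ E]

theorem norm_sq_le_two_mul_integral_Ioi_smul (f : 𝓢(E, F)) {e : E} (he : ‖e‖ = 1) (R : ℝ) :
    ‖f (R • e)‖ ^ 2 ≤ 2 * ∫ r in Ioi R, ‖f (r • e)‖ * ‖fderiv ℝ f (r • e)‖ := by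
  have hline := (ContinuousLinearMap.toSpanSingleton ℝ e).hasTemperateGrowth
  have hiso := (LinearIsometry.toSpanSingleton ℝ E he).isometry.antilipschitz
  let u : 𝓢(ℝ, F) := compCLMOfAntilipschitz ℝ hline hiso f
  let v : 𝓢(ℝ, E →L[ℝ] F) := compCLMOfAntilipschitz ℝ hline hiso (fderivCLM ℝ E F f)
  have hderiv : ∀ r, ‖deriv u r‖ ≤ ‖fderiv ℝ f (r • e)‖ := fun r => by
    have h : HasDerivAt (fun s : ℝ => f (s • e)) (fderiv ℝ f (r • e) e) r := by
      simpa [Function.comp_def] using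
        f.differentiableAt.hasFDerivAt.comp_hasDerivAt r ((hasDerivAt_id r).smul_const e)
    rw [show deriv u r = _ from h.deriv]
    simpa [he] using (fderiv ℝ f (r • e)).le_opNorm e
  calc ‖f (R • e)‖ ^ 2 = ‖u R‖ ^ 2 := rfl
    _ ≤ 2 * ∫ r in Ioi R, ‖u r‖ * ‖deriv u r‖ := u.norm_sq_le_two_mul_integral_Ioi R
    _ ≤ 2 * ∫ r in Ioi R, ‖f (r • e)‖ * ‖fderiv ℝ f (r • e)‖ := by
        gcongr 2 * ?_
        exact integral_mono (integrable_norm_mul_norm volume u (derivCLM ℝ F u)).integrableOn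
          (integrable_norm_mul_norm volume u v).integrableOn
          fun r => mul_le_mul_of_nonneg_left (hderiv r) (norm_nonneg _)

theorem pow_mul_sqrt_mul_norm_sq_le_integral_Ioi (f : 𝓢(E, F)) {e : E} (he : ‖e‖ = 1)
    {w : ℝ → ℝ} (hw : ∀ r, 0 ≤ w r) {C R : ℝ} (hR : 0 ≤ R) (hmono : ∀ r, R ≤ r → w R ≤ C * w r)
    (n : ℕ) (hint : IntegrableOn
      (fun r => r ^ n * (‖f (r • e)‖ * (√(w r) * ‖fderiv ℝ f (r • e)‖))) (Ioi 0)) :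
    R ^ n * √(w R) * ‖f (R • e)‖ ^ 2 ≤
      2 * √C * ∫ r in Ioi 0, r ^ n * (‖f (r • e)‖ * (√(w r) * ‖fderiv ℝ f (r • e)‖)) := by
  set g := fun r => r ^ n * (‖f (r • e)‖ * (√(w r) * ‖fderiv ℝ f (r • e)‖))
  have hg : ∀ r ∈ Ioi 0, 0 ≤ g r := fun r (hr : 0 < r) => by positivity
  have hpt : ∀ r ∈ Ioi R,
      R ^ n * √(w R) * (‖f (r • e)‖ * ‖fderiv ℝ f (r • e)‖) ≤ √C * g r := fun r (hr : R < r) => by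
    have hr0 : 0 ≤ r := hR.trans hr.le
    have hw' : √(w R) ≤ √C * √(w r) := by
      rw [← sqrt_mul' _ (hw r)]
      exact sqrt_le_sqrt (hmono r hr.le)
    calc R ^ n * √(w R) * (‖f (r • e)‖ * ‖fderiv ℝ f (r • e)‖)
        ≤ r ^ n * (√C * √(w r)) * (‖f (r • e)‖ * ‖fderiv ℝ f (r • e)‖) := by
          gcongr
      _ = √C * g r := by ring
  calc R ^ n * √(w R) * ‖f (R • e)‖ ^ 2
      ≤ R ^ n * √(w R) * (2 * ∫ r in Ioi R, ‖f (r • e)‖ * ‖fderiv ℝ f (r • e)‖) := by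
        gcongr
        exact f.norm_sq_le_two_mul_integral_Ioi_smul he R
    _ = 2 * ∫ r in Ioi R, R ^ n * √(w R) * (‖f (r • e)‖ * ‖fderiv ℝ f (r • e)‖) := by
        rw [integral_const_mul]; ring
    _ ≤ 2 * ∫ r in Ioi R, √C * g r := by
        gcongr 2 * ?_
        exact integral_mono_of_nonneg (.of_forall fun r => by positivity)
          ((hint.mono_set (Ioi_subset_Ioi hR)).const_mul _)
          ((ae_restrict_iff' measurableSet_Ioi).2 (.of_forall hpt))
    _ ≤ 2 * ∫ r in Ioi 0, √C * g r := by
        gcongr 2 * ?_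
        exact setIntegral_mono_set (hint.const_mul _)
          ((ae_restrict_iff' measurableSet_Ioi).2 (.of_forall fun r hr => by
            have := hg r hr; positivity))
          (Ioi_subset_Ioi hR).eventuallyLE
    _ = 2 * √C * ∫ r in Ioi 0, g r := by rw [integral_const_mul]; ring

end SchwartzMap

theorem finrank_mul_measureReal_unitBall_pos {E : Type*} [NormedAddCommGroup E]
    [NormedSpace ℝ E] [FiniteDimensional ℝ E] [Nontrivial E] [MeasurableSpace E] [BorelSpace E]
    (μ : Measure E) [μ.IsAddHaarMeasure] : 0 < finrank ℝ E * μ.real (ball (0 : E) 1) :=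
  mul_pos (Nat.cast_pos.2 finrank_pos)
    (ENNReal.toReal_pos (measure_ball_pos μ 0 one_pos).ne' measure_ball_lt_top.ne)

def IsRadial {E F : Type*} [Norm E] (f : E → F) : Prop :=
  ∀ x y, ‖x‖ = ‖y‖ → f x = f y

namespace IsRadial

variable {E F : Type*} [NormedAddCommGroup E] [InnerProductSpace ℝ E] {e : E}

theorem apply_norm_smul {f : E → F} (hf : IsRadial f) (he : ‖e‖ = 1) (x : E) :
    f (‖x‖ • e) = f x :=
  hf _ _ (by simp [norm_smul, he])

theorem norm_fderiv [NormedAddCommGroup F] [NormedSpace ℝ F] {f : E → F} (hf : IsRadial f)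
    (hd : Differentiable ℝ f) : IsRadial fun x => ‖fderiv ℝ f x‖ := by
  suffices h : ∀ x y : E, ‖x‖ = ‖y‖ → ‖fderiv ℝ f x‖ ≤ ‖fderiv ℝ f y‖ from
    fun x y hxy => (h x y hxy).antisymm (h y x hxy.symm)
  intro x y hxy
  -- the reflection exchanging `x` and `y` is an isometry leaving `f` invariant
  let A : E ≃ₗᵢ[ℝ] E := Submodule.reflection (ℝ ∙ (x - y))ᗮ
  have hAx : A x = y := Submodule.reflection_sub hxy
  have hfA : f ∘ A = f := funext fun z => hf _ _ (A.norm_map z)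
  have hchain : fderiv ℝ f x = (fderiv ℝ f y).comp (A : E →L[ℝ] E) := by
    rw [← hAx, ← A.fderiv, ← fderiv_comp x (hd _) A.differentiableAt, hfA]
  calc ‖fderiv ℝ f x‖ ≤ ‖fderiv ℝ f y‖ * ‖(A : E →L[ℝ] E)‖ := by
        rw [hchain]; exact (fderiv ℝ f y).opNorm_comp_le _
    _ ≤ ‖fderiv ℝ f y‖ := mul_le_of_le_one_right (norm_nonneg _)
        (ContinuousLinearMap.opNorm_le_bound _ zero_le_one fun v => by simp)

variable [FiniteDimensional ℝ E] [Nontrivial E] [MeasurableSpace E] [BorelSpace E]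
  (μ : Measure E) [μ.IsAddHaarMeasure] {g : E → ℝ}

theorem integral_eq (hg : IsRadial g) (he : ‖e‖ = 1) :
    ∫ x, g x ∂μ = finrank ℝ E * μ.real (ball 0 1) *
      ∫ r in Ioi 0, r ^ (finrank ℝ E - 1) * g (r • e) := by
  have h := integral_fun_norm_addHaar μ fun r => g (r • e)
  simp only [hg.apply_norm_smul he, smul_eq_mul, nsmul_eq_mul] at h
  rw [h, mul_assoc]

theorem integrableOn_Ioi (hg : IsRadial g) (he : ‖e‖ = 1) (hint : Integrable g μ) :
    IntegrableOn (fun r => r ^ (finrank ℝ E - 1) * g (r • e)) (Ioi 0) := by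
  have h := integrable_fun_norm_addHaar μ (f := fun r => g (r • e))
  simp only [hg.apply_norm_smul he, smul_eq_mul] at h
  exact h.1 hint

end IsRadial

namespace SchwartzMap

variable {E F : Type*} [NormedAddCommGroup E] [InnerProductSpace ℝ E] [FiniteDimensional ℝ E]
  [Nontrivial E] [MeasurableSpace E] [BorelSpace E] [NormedAddCommGroup F] [InnerProductSpace ℝ F]

theorem norm_pow_mul_sqrt_mul_norm_sq_le_of_isRadial (μ : Measure E) [μ.IsAddHaarMeasure]
    (f : 𝓢(E, F)) (hf : IsRadial f) {ω : E → ℝ} {B C : ℝ} (hωm : Measurable ω)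
    (hω₀ : ∀ x, 0 ≤ ω x) (hωB : ∀ x, ω x ≤ B) (hω : IsRadial ω)
    {x : E} (hmono : ∀ y, ‖x‖ ≤ ‖y‖ → ω x ≤ C * ω y) :
    ‖x‖ ^ (finrank ℝ E - 1) * √(ω x) * ‖f x‖ ^ 2 ≤
      2 * √C / (finrank ℝ E * μ.real (ball 0 1)) * √(∫ y, ‖f y‖ ^ 2 ∂μ) *
        √(∫ y, ω y * ‖fderiv ℝ f y‖ ^ 2 ∂μ) := by
  obtain ⟨e, he⟩ := exists_norm_eq E zero_le_one
  set h := fun y => ‖f y‖ * (√(ω y) * ‖fderiv ℝ f y‖)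
  have hh : IsRadial h := fun a b hab => by
    simp only [h, hf a b hab, hω a b hab, hf.norm_fderiv f.differentiable a b hab]
  have hsphere := finrank_mul_measureReal_unitBall_pos μ
  have hray := f.pow_mul_sqrt_mul_norm_sq_le_integral_Ioi he (w := fun r => ω (r • e))
    (fun r => hω₀ _) (norm_nonneg x)
    (fun r hr => by
      rw [hω.apply_norm_smul he]
      exact hmono _ (by simpa [norm_smul, he] using hr.trans (le_abs_self r)))
    (finrank ℝ E - 1)
    (hh.integrableOn_Ioi μ he (f.integrable_norm_mul_sqrt_mul_norm_fderiv μ hωm hωB))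
  rw [hf.apply_norm_smul he, hω.apply_norm_smul he] at hray
  calc ‖x‖ ^ (finrank ℝ E - 1) * √(ω x) * ‖f x‖ ^ 2
      ≤ 2 * √C * ∫ r in Ioi 0, r ^ (finrank ℝ E - 1) * h (r • e) := hray
    _ = 2 * √C / (finrank ℝ E * μ.real (ball 0 1)) * ∫ y, h y ∂μ := by
        rw [hh.integral_eq μ he, div_mul_eq_mul_div, eq_div_iff hsphere.ne']
        ring
    _ ≤ _ := by
        rw [mul_assoc _ √_]
        gcongr
        exact f.integral_norm_mul_sqrt_mul_norm_fderiv_le μ hωm hω₀ hωB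

end SchwartzMap

/-- Weighted radial Sobolev embedding on `ℝ^d`. -/
theorem weighted_radial_sobolev (d : ℕ) (hd : 1 ≤ d) :
    ∃ C : ℝ, 0 < C ∧
      ∀ (ω : EuclideanSpace ℝ (Fin d) → ℝ) (f : SchwartzMap (EuclideanSpace ℝ (Fin d)) ℂ)
        (C' B : ℝ), 0 < C' →
        Measurable ω → (∀ x, 0 ≤ ω x) → (∀ x, ω x ≤ B) →
        (∀ x y : EuclideanSpace ℝ (Fin d), ‖x‖ = ‖y‖ → ω x = ω y) →
        (∀ x y : EuclideanSpace ℝ (Fin d), ‖x‖ = ‖y‖ → f x = f y) →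
        (∀ x y : EuclideanSpace ℝ (Fin d), ‖x‖ ≤ ‖y‖ → ω x ≤ C' * ω y) →
        ∀ x : EuclideanSpace ℝ (Fin d),
          ‖x‖ ^ (d - 1) * Real.sqrt (ω x) * ‖f x‖ ^ 2
            ≤ C * C' * Real.sqrt (∫ y, ‖f y‖ ^ 2) *
                Real.sqrt (∫ y, ω y * ‖fderiv ℝ (fun z => f z) y‖ ^ 2) := by
  have : NeZero d := ⟨by omega⟩
  have hsphere := finrank_mul_measureReal_unitBall_pos
    (volume : Measure (EuclideanSpace ℝ (Fin d)))
  rw [finrank_euclideanSpace_fin] at hsphere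
  refine ⟨2 / (d * volume.real (ball (0 : EuclideanSpace ℝ (Fin d)) 1)), by positivity, ?_⟩
  intro ω f C' B hC' hωm hω₀ hωB hω hf hmono x
  rcases (hω₀ x).eq_or_lt with hx | hx
  · rw [← hx, sqrt_zero, mul_zero, zero_mul]
    have := hC'.le
    positivity
  have hC'_one : 1 ≤ C' := le_of_mul_le_mul_right (by simpa using hmono x x le_rfl) hx
  have key := f.norm_pow_mul_sqrt_mul_norm_sq_le_of_isRadial volume hf hωm hω₀ hωB hω (hmono x)
  rw [finrank_euclideanSpace_fin, mul_div_right_comm] at key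
  refine key.trans ?_
  gcongr
  exact sqrt_le_self_iff.2 (Or.inr hC'_one)
end

section
/- Let d ≥ 3 and u₀ ∈ Ḣ¹(ℝ^d) with E(u₀) ≤ (1−δ₀)E(W) for some δ₀ > 0 and ‖∇u₀‖_2 ≥ ‖∇W‖_2. Then there exists δ₂ > 0 depending only on δ₀ and d such that: (1) ‖∇u₀‖_2² ≥ (1+δ₂)‖∇W‖_2²; and (2) ∫_{ℝ^d}(|∇u₀|² − |u₀|^{2d/(d-2)}) dx ≤ −2δ₂/((d-2)C_d^d). -/
/-!
The bubble satisfies `∫ W ^ (2d/(d-2)) = ∫ ‖∇W‖² = C_d^{-d}` (the equation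
`-ΔW = W^{(d+2)/(d-2)}` tested against `W`; here it follows from one integration by parts in the
radial variable), so `E(W) = C_d^{-d} / d`. With `t = C_d^d ‖∇u₀‖₂² ≥ 1`, sharp Sobolev gives
`E(u₀) ≥ C_d^{-d} f(t)` for `f(t) = t/2 - ((d-2)/(2d)) t^{d/(d-2)}`, and `f(1) = 1/d`. Since
`f(t) ≤ (1 - δ₀)/d`, continuity of `f` at `1` keeps `t` at distance `δ₂(d, δ₀)` from `1`.
Claim (2) only needs `‖∇u₀‖₂ ≥ ‖∇W‖₂` and the identity relating `∫ (|∇u₀|² - |u₀|^p)` to `E(u₀)`.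
-/

open MeasureTheory Real Set Filter Topology

section RadialIntegrals

variable {c : ℝ}

lemma one_add_sq_div_rpow_neg_le (hc : 0 < c) {a : ℝ} (ha : 0 ≤ a) {r : ℝ} (hr : 0 < r) :
    (1 + r ^ 2 / c) ^ (-a) ≤ c ^ a * r ^ (-(2 * a)) := by
  calc (1 + r ^ 2 / c) ^ (-a) ≤ (r ^ 2 / c) ^ (-a) :=
        rpow_le_rpow_of_nonpos (by positivity) (by linarith) (by linarith)
    _ = c ^ a * r ^ (-(2 * a)) := by
      rw [div_rpow (by positivity) hc.le, ← rpow_natCast, ← rpow_mul hr.le, rpow_neg hc.le,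
        div_inv_eq_mul, mul_comm]
      ring_nf

lemma integrableOn_Ioi_pow_mul_one_add_sq_div_rpow (hc : 0 < c) {k n : ℕ}
    (hkn : k + 1 < 2 * n) :
    IntegrableOn (fun r : ℝ => r ^ k * (1 + r ^ 2 / c) ^ (-(n : ℝ))) (Ioi 0) := by
  have hcont : Continuous (fun r : ℝ => r ^ k * (1 + r ^ 2 / c) ^ (-(n : ℝ))) := by
    refine (continuous_pow k).mul (Continuous.rpow_const (by fun_prop) fun r => ?_)
    exact Or.inl (by positivity)
  rw [← Ioc_union_Ioi_eq_Ioi zero_le_one, integrableOn_union]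
  refine ⟨hcont.integrableOn_Ioc, ?_⟩
  have hexp : (k : ℝ) - 2 * n < -1 := by
    have : ((k + 1 : ℕ) : ℝ) < ((2 * n : ℕ) : ℝ) := by exact_mod_cast hkn
    push_cast at this
    linarith
  refine ((integrableOn_Ioi_rpow_of_lt hexp zero_lt_one).const_mul (c ^ (n : ℝ))).mono'
    hcont.aestronglyMeasurable.restrict ?_
  filter_upwards [ae_restrict_mem measurableSet_Ioi] with r (hr : 1 < r)
  have hr0 : 0 < r := by linarith
  rw [norm_of_nonneg (by positivity), ← rpow_natCast r k, sub_eq_add_neg, rpow_add hr0,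
    mul_left_comm]
  exact mul_le_mul_of_nonneg_left (one_add_sq_div_rpow_neg_le hc n.cast_nonneg hr0)
    (by positivity)

lemma tendsto_pow_mul_one_add_sq_div_rpow_atTop (hc : 0 < c) {n : ℕ} (hn : 2 < n) :
    Tendsto (fun r : ℝ => r ^ n * (1 + r ^ 2 / c) ^ (1 - (n : ℝ))) atTop (𝓝 0) := by
  have hn' : (2 : ℝ) < n := by exact_mod_cast hn
  have hdecay : Tendsto (fun r : ℝ => c ^ ((n : ℝ) - 1) * r ^ (-((n : ℝ) - 2))) atTop (𝓝 0) := by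
    simpa using (tendsto_rpow_neg_atTop (by linarith : 0 < (n : ℝ) - 2)).const_mul
      (c ^ ((n : ℝ) - 1))
  refine squeeze_zero' ?_ ?_ hdecay <;> filter_upwards [eventually_gt_atTop 0] with r hr
  · positivity
  calc r ^ n * (1 + r ^ 2 / c) ^ (1 - (n : ℝ))
      ≤ r ^ (n : ℝ) * (c ^ ((n : ℝ) - 1) * r ^ (-(2 * ((n : ℝ) - 1)))) := by
        rw [rpow_natCast, ← neg_sub]
        exact mul_le_mul_of_nonneg_left (one_add_sq_div_rpow_neg_le hc (by linarith) hr)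
          (by positivity)
    _ = c ^ ((n : ℝ) - 1) * r ^ (-((n : ℝ) - 2)) := by
      rw [mul_left_comm, ← rpow_add hr]
      ring_nf

lemma hasDerivAt_pow_mul_one_add_sq_div_rpow (hc : 0 < c) {n : ℕ} (hn : 1 ≤ n) (r : ℝ) :
    HasDerivAt (fun r : ℝ => r ^ n * (1 + r ^ 2 / c) ^ (1 - (n : ℝ)))
      (n * (r ^ (n - 1) * (1 + r ^ 2 / c) ^ (-(n : ℝ)))
        - (n - 2) / c * (r ^ (n + 1) * (1 + r ^ 2 / c) ^ (-(n : ℝ)))) r := by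
  have hv : 0 < 1 + r ^ 2 / c := by positivity
  have hinner : HasDerivAt (fun r : ℝ => 1 + r ^ 2 / c) (2 * r / c) r := by
    simpa using ((hasDerivAt_pow 2 r).div_const c).const_add 1
  refine ((hasDerivAt_pow n r).mul
    ((hasDerivAt_rpow_const (p := 1 - (n : ℝ)) (Or.inl hv.ne')).comp r hinner)).congr_deriv ?_
  obtain ⟨m, rfl⟩ := Nat.exists_eq_add_of_le' hn
  simp only [Function.comp_apply, add_tsub_cancel_right, Nat.cast_add, Nat.cast_one]
  rw [show (1 : ℝ) - (m + 1) - 1 = -(m + 1) by ring,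
    show (1 : ℝ) - (m + 1) = 1 + -(m + 1) by ring, rpow_add hv, rpow_one]
  field_simp
  ring

theorem integral_Ioi_pow_mul_one_add_sq_div_rpow (hc : 0 < c) {n : ℕ} (hn : 2 < n) :
    ∫ r in Ioi 0, r ^ (n + 1) * (1 + r ^ 2 / c) ^ (-(n : ℝ))
      = c * n / (n - 2) * ∫ r in Ioi 0, r ^ (n - 1) * (1 + r ^ 2 / c) ^ (-(n : ℝ)) := by
  have hn' : (2 : ℝ) < n := by exact_mod_cast hn
  have hlow := integrableOn_Ioi_pow_mul_one_add_sq_div_rpow hc (k := n - 1) (n := n) (by omega)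
  have hhigh := integrableOn_Ioi_pow_mul_one_add_sq_div_rpow hc (k := n + 1) (n := n) (by omega)
  have hibp := integral_Ioi_of_hasDerivAt_of_tendsto'
    (fun r _ => hasDerivAt_pow_mul_one_add_sq_div_rpow hc (by omega) r)
    ((hlow.const_mul _).sub (hhigh.const_mul _)) (tendsto_pow_mul_one_add_sq_div_rpow_atTop hc hn)
  rw [integral_sub (hlow.const_mul _) (hhigh.const_mul _), integral_const_mul,
    integral_const_mul, zero_pow (by omega), zero_mul, sub_zero] at hibp
  have : (n : ℝ) - 2 ≠ 0 := by linarith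
  field_simp at hibp ⊢
  linarith

end RadialIntegrals

section Bubble

variable {E : Type*} [NormedAddCommGroup E]

/-- The Aubin–Talenti bubble, normalised so that `-Δ W = W ^ ((n + 2) / (n - 2))`. -/
noncomputable def bubble (n : ℕ) (x : E) : ℝ :=
  (1 + ‖x‖ ^ 2 / (n * (n - 2 : ℝ))) ^ (-((n : ℝ) - 2) / 2)

lemma bubble_rpow {n : ℕ} (hn : 2 < n) (x : E) :
    bubble n x ^ (2 * (n : ℝ) / (n - 2)) = (1 + ‖x‖ ^ 2 / (n * (n - 2 : ℝ))) ^ (-(n : ℝ)) := by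
  have hn' : (2 : ℝ) < n := by exact_mod_cast hn
  have hc : (0 : ℝ) < n * (n - 2) := mul_pos (by linarith) (by linarith)
  rw [bubble, ← rpow_mul (by positivity)]
  congr 1
  field_simp [(by linarith : (n : ℝ) - 2 ≠ 0)]

variable [InnerProductSpace ℝ E]

lemma hasFDerivAt_one_add_norm_sq_div_rpow {c : ℝ} (hc : 0 < c) (a : ℝ) (x : E) :
    HasFDerivAt (fun x : E => (1 + ‖x‖ ^ 2 / c) ^ a)
      ((2 * a / c * (1 + ‖x‖ ^ 2 / c) ^ (a - 1)) • innerSL ℝ x) x := by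
  have hprofile : HasDerivAt (fun s : ℝ => (1 + s / c) ^ a)
      (a * (1 + ‖x‖ ^ 2 / c) ^ (a - 1) * (1 / c)) (‖x‖ ^ 2) :=
    (hasDerivAt_rpow_const (Or.inl (by positivity))).comp _
      (((hasDerivAt_id _).div_const c).const_add 1)
  refine (hprofile.comp_hasFDerivAt x (hasStrictFDerivAt_norm_sq x).hasFDerivAt).congr_fderiv ?_
  rw [two_nsmul, smul_add, ← add_smul]
  congr 1
  ring

lemma norm_fderiv_bubble_sq {n : ℕ} (hn : 2 < n) (x : E) :
    ‖fderiv ℝ (bubble n) x‖ ^ 2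
      = ‖x‖ ^ 2 / n ^ 2 * (1 + ‖x‖ ^ 2 / (n * (n - 2 : ℝ))) ^ (-(n : ℝ)) := by
  have hn' : (2 : ℝ) < n := by exact_mod_cast hn
  have hc : (0 : ℝ) < n * (n - 2) := mul_pos (by linarith) (by linarith)
  have hv : 0 < 1 + ‖x‖ ^ 2 / (n * (n - 2 : ℝ)) := by positivity
  have hcoeff : 2 * (-((n : ℝ) - 2) / 2) / (n * (n - 2)) = -1 / n := by
    field_simp [(by linarith : (n : ℝ) - 2 ≠ 0)]
  unfold bubble
  rw [(hasFDerivAt_one_add_norm_sq_div_rpow hc _ x).fderiv, hcoeff, norm_smul,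
    innerSL_apply_norm, norm_mul, norm_of_nonneg (rpow_nonneg hv.le _), norm_div, norm_neg,
    norm_one, RCLike.norm_natCast, mul_pow, mul_pow, ← rpow_mul_natCast hv.le]
  ring_nf

theorem integral_bubble_rpow_eq_integral_norm_fderiv_sq [FiniteDimensional ℝ E]
    [MeasurableSpace E] [BorelSpace E] (μ : Measure E) [μ.IsAddHaarMeasure] {n : ℕ}
    (hE : Module.finrank ℝ E = n) (hn : 2 < n) :
    ∫ x, bubble n x ^ (2 * (n : ℝ) / (n - 2)) ∂μ = ∫ x, ‖fderiv ℝ (bubble n) x‖ ^ 2 ∂μ := by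
  have hn' : (2 : ℝ) < n := by exact_mod_cast hn
  have : Nontrivial E := Module.nontrivial_of_finrank_pos (by rw [hE]; omega)
  simp_rw [bubble_rpow hn, norm_fderiv_bubble_sq hn]
  have hc : (0 : ℝ) < n * (n - 2) := mul_pos (by linarith) (by linarith)
  rw [integral_fun_norm_addHaar μ (fun r => (1 + r ^ 2 / (n * (n - 2))) ^ (-(n : ℝ))),
    integral_fun_norm_addHaar μ
      (fun r => r ^ 2 / n ^ 2 * (1 + r ^ 2 / (n * (n - 2))) ^ (-(n : ℝ))), hE]
  congr 2
  have hintegrand (r : ℝ) :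
      r ^ (n - 1) • (r ^ 2 / n ^ 2 * (1 + r ^ 2 / (n * (n - 2))) ^ (-(n : ℝ)))
        = ((n : ℝ) ^ 2)⁻¹ * (r ^ (n + 1) * (1 + r ^ 2 / (n * (n - 2))) ^ (-(n : ℝ))) := by
    rw [smul_eq_mul, show n + 1 = n - 1 + 2 by omega, pow_add]
    ring
  simp_rw [hintegrand, smul_eq_mul]
  rw [integral_const_mul, integral_Ioi_pow_mul_one_add_sq_div_rpow hc hn]
  field_simp [(by linarith : (n : ℝ) - 2 ≠ 0)]

end Bubble

/-- `E(u)` in terms of `A = ‖∇u‖₂²` and `N = ‖u‖_p^p`, `p = 2d/(d-2)`. -/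
noncomputable def criticalEnergy (d A N : ℝ) : ℝ := (1 / 2) * A - ((d - 2) / (2 * d)) * N

section CriticalEnergy

variable {d : ℝ}

lemma criticalEnergy_self (hd : d ≠ 0) (P : ℝ) : criticalEnergy d P P = P / d := by
  unfold criticalEnergy
  field_simp
  ring

lemma criticalEnergy_mul (c A N : ℝ) :
    criticalEnergy d (c * A) (c * N) = c * criticalEnergy d A N := by
  unfold criticalEnergy
  ring

lemma criticalEnergy_antitone (hd : 2 ≤ d) (A : ℝ) : Antitone (criticalEnergy d A) := by
  intro N N' h
  unfold criticalEnergy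
  have : 0 ≤ (d - 2) / (2 * d) := div_nonneg (by linarith) (by linarith)
  gcongr

lemma sub_eq_criticalEnergy (hd : 2 < d) (A N : ℝ) :
    A - N = 2 * d / (d - 2) * criticalEnergy d A N - 2 / (d - 2) * A := by
  unfold criticalEnergy
  have : d - 2 ≠ 0 := by linarith
  have : d ≠ 0 := by linarith
  field_simp
  ring

lemma exists_gap_criticalEnergy (hd : 2 < d) {δ₀ : ℝ} (hδ₀ : 0 < δ₀) :
    ∃ δ₂, 0 < δ₂ ∧ δ₂ ≤ δ₀ ∧ ∀ t, 1 ≤ t →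
      criticalEnergy d t (t ^ (d / (d - 2))) ≤ (1 - δ₀) * criticalEnergy d 1 1 → 1 + δ₂ ≤ t := by
  have hcont : ContinuousAt (fun t => criticalEnergy d t (t ^ (d / (d - 2)))) 1 := by
    unfold criticalEnergy
    have := Real.continuousAt_rpow_const 1 (d / (d - 2)) (Or.inl one_ne_zero)
    fun_prop
  have hlt : (1 - δ₀) * criticalEnergy d 1 1 < criticalEnergy d 1 (1 ^ (d / (d - 2))) := by
    rw [one_rpow, criticalEnergy_self (by linarith)]
    have : 0 < 1 / d := by positivity
    nlinarith
  obtain ⟨ε, hε, hnear⟩ := Metric.eventually_nhds_iff.mp (hcont.eventually_const_lt hlt)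
  refine ⟨min (ε / 2) δ₀, by positivity, min_le_right _ _, fun t ht hE => ?_⟩
  by_contra! hsmall
  have : dist t 1 < ε := by
    rw [Real.dist_eq, abs_of_nonneg (by linarith)]
    linarith [min_le_left (ε / 2) δ₀]
  exact (hnear this).not_ge hE

lemma le_mul_rpow_of_rpow_le_mul_sqrt (hd : 2 < d) {Cd A N : ℝ} (hCd : 0 < Cd) (hA : 0 ≤ A)
    (hN : 0 ≤ N) (hsob : N ^ ((d - 2) / (2 * d)) ≤ Cd * √A) :
    N ≤ Cd ^ (-d) * (A * Cd ^ d) ^ (d / (d - 2)) := by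
  have hd2 : d - 2 ≠ 0 := by linarith
  have hpow : N ≤ (Cd * √A) ^ ((2 * d) / (d - 2)) := by
    rw [← inv_div]
    exact (le_rpow_inv_iff_of_pos hN (by positivity) (div_pos (by linarith) (by linarith))).mpr
      hsob
  calc N ≤ (Cd * √A) ^ ((2 * d) / (d - 2)) := hpow
    _ = ((Cd * √A) ^ (2 : ℝ)) ^ (d / (d - 2)) := by
      rw [← rpow_mul (by positivity)]
      ring_nf
    _ = Cd ^ (2 * (d / (d - 2))) * A ^ (d / (d - 2)) := by
      rw [rpow_two, mul_pow, sq_sqrt hA, ← rpow_two, mul_rpow (by positivity) hA,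
        ← rpow_mul hCd.le]
    _ = Cd ^ (-d) * (A * Cd ^ d) ^ (d / (d - 2)) := by
      rw [mul_rpow hA (by positivity), ← rpow_mul hCd.le, mul_left_comm, ← rpow_add hCd,
        mul_comm]
      congr 2
      field_simp
      ring

lemma one_add_mul_le_of_criticalEnergy_le (hd : 2 < d) {Cd A N δ₀ δ₂ : ℝ} (hCd : 0 < Cd)
    (hN : 0 ≤ N) (hA : Cd ^ (-d) ≤ A) (hsob : N ^ ((d - 2) / (2 * d)) ≤ Cd * √A)
    (hE : criticalEnergy d A N ≤ (1 - δ₀) * criticalEnergy d (Cd ^ (-d)) (Cd ^ (-d)))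
    (hgap : ∀ t, 1 ≤ t →
      criticalEnergy d t (t ^ (d / (d - 2))) ≤ (1 - δ₀) * criticalEnergy d 1 1 → 1 + δ₂ ≤ t) :
    (1 + δ₂) * Cd ^ (-d) ≤ A := by
  set P := Cd ^ (-d)
  set t := A * Cd ^ d
  have hP : 0 < P := by positivity
  have hPt : P * t = A := by
    rw [mul_left_comm, ← rpow_add hCd, neg_add_cancel, rpow_zero, mul_one]
  have ht : 1 ≤ t := by
    rw [← mul_le_mul_iff_right₀ hP, hPt, mul_one]
    exact hA
  have hprofile :
      P * criticalEnergy d t (t ^ (d / (d - 2))) ≤ P * ((1 - δ₀) * criticalEnergy d 1 1) :=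
    calc P * criticalEnergy d t (t ^ (d / (d - 2)))
        = criticalEnergy d A (P * t ^ (d / (d - 2))) := by rw [← criticalEnergy_mul, hPt]
      _ ≤ criticalEnergy d A N := criticalEnergy_antitone hd.le A
          (le_mul_rpow_of_rpow_le_mul_sqrt hd hCd (hP.le.trans hA) hN hsob)
      _ ≤ (1 - δ₀) * criticalEnergy d P P := hE
      _ = P * ((1 - δ₀) * criticalEnergy d 1 1) := by
        rw [← mul_one P, criticalEnergy_mul, mul_one]
        ring
  calc (1 + δ₂) * P ≤ t * P := by
        gcongr
        exact hgap t ht (le_of_mul_le_mul_left hprofile hP)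
    _ = A := by rw [mul_comm, hPt]

lemma sub_le_of_criticalEnergy_le (hd : 2 < d) {P A N δ₀ δ₂ : ℝ} (hP : 0 ≤ P) (hA : P ≤ A)
    (hδ : δ₂ ≤ δ₀) (hE : criticalEnergy d A N ≤ (1 - δ₀) * criticalEnergy d P P) :
    A - N ≤ -(2 * δ₂) * P / (d - 2) := by
  rw [criticalEnergy_self (by linarith)] at hE
  have hd2 : d - 2 ≠ 0 := by linarith
  have hscaled : (2 * d / (d - 2) * criticalEnergy d A N - 2 / (d - 2) * A) * (d - 2)
      = 2 * d * criticalEnergy d A N - 2 * A := by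
    field_simp
  have hbound : 2 * d * criticalEnergy d A N ≤ 2 * (1 - δ₀) * P := by
    calc 2 * d * criticalEnergy d A N ≤ 2 * d * ((1 - δ₀) * (P / d)) := by gcongr
      _ = 2 * (1 - δ₀) * P := by field_simp
  rw [sub_eq_criticalEnergy hd, le_div_iff₀ (by linarith), hscaled]
  linarith [mul_le_mul_of_nonneg_right hδ hP]

end CriticalEnergy

/-- Energy trapping, case `‖∇u₀‖₂ ≥ ‖∇W‖₂`: if `E(u₀) ≤ (1−δ₀)E(W)` then
`‖∇u₀‖₂² ≥ (1+δ₂)‖∇W‖₂²` and `∫(|∇u₀|² − |u₀|^{2d/(d-2)}) ≤ −2δ₂/((d-2)C_d^d)`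
for some `δ₂ = δ₂(δ₀,d) > 0`, where `C_d` is the sharp Sobolev constant with
`‖∇W‖₂² = C_d^{-d}`. -/
theorem energy_trapping_above (d : ℕ) (hd : 3 ≤ d) (δ₀ : ℝ) (hδ₀ : 0 < δ₀)
    (Cd : ℝ) (hCd : 0 < Cd)
    (W : EuclideanSpace ℝ (Fin d) → ℝ)
    (hW : ∀ x, W x = (1 + ‖x‖ ^ 2 / (d * (d - 2 : ℝ))) ^ (-((d : ℝ) - 2) / 2))
    (hCdW : (∫ x, ‖fderiv ℝ W x‖ ^ 2) = Cd ^ (-(d : ℝ)))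
    (hsob : ∀ f : EuclideanSpace ℝ (Fin d) → ℂ, Differentiable ℝ f →
      Integrable (fun x => ‖fderiv ℝ f x‖ ^ 2) →
      Integrable (fun x => ‖f x‖ ^ ((2 * (d : ℝ)) / ((d : ℝ) - 2))) →
      (∫ x, ‖f x‖ ^ ((2 * (d : ℝ)) / ((d : ℝ) - 2))) ^ (((d : ℝ) - 2) / (2 * (d : ℝ)))
        ≤ Cd * Real.sqrt (∫ x, ‖fderiv ℝ f x‖ ^ 2)) :
    ∃ δ₂ : ℝ, 0 < δ₂ ∧
      ∀ u₀ : EuclideanSpace ℝ (Fin d) → ℂ, Differentiable ℝ u₀ →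
        Integrable (fun x => ‖fderiv ℝ u₀ x‖ ^ 2) →
        Integrable (fun x => ‖u₀ x‖ ^ ((2 * (d : ℝ)) / ((d : ℝ) - 2))) →
        (1 / 2) * (∫ x, ‖fderiv ℝ u₀ x‖ ^ 2)
            - (((d : ℝ) - 2) / (2 * (d : ℝ)))
                * (∫ x, ‖u₀ x‖ ^ ((2 * (d : ℝ)) / ((d : ℝ) - 2)))
          ≤ (1 - δ₀) * ((1 / 2) * (∫ x, ‖fderiv ℝ W x‖ ^ 2)
            - (((d : ℝ) - 2) / (2 * (d : ℝ)))
                * (∫ x, W x ^ ((2 * (d : ℝ)) / ((d : ℝ) - 2)))) →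
        (∫ x, ‖fderiv ℝ W x‖ ^ 2) ≤ (∫ x, ‖fderiv ℝ u₀ x‖ ^ 2) →
        ((1 + δ₂) * (∫ x, ‖fderiv ℝ W x‖ ^ 2) ≤ ∫ x, ‖fderiv ℝ u₀ x‖ ^ 2) ∧
        ((∫ x, ‖fderiv ℝ u₀ x‖ ^ 2)
            - (∫ x, ‖u₀ x‖ ^ ((2 * (d : ℝ)) / ((d : ℝ) - 2)))
          ≤ -(2 * δ₂) / (((d : ℝ) - 2) * Cd ^ (d : ℝ))) := by
  have hd' : (2 : ℝ) < d := by exact_mod_cast hd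
  have hWp : ∫ x, W x ^ (2 * (d : ℝ) / (d - 2)) = ∫ x, ‖fderiv ℝ W x‖ ^ 2 := by
    rw [show W = bubble d from funext hW]
    exact integral_bubble_rpow_eq_integral_norm_fderiv_sq volume finrank_euclideanSpace_fin hd
  obtain ⟨δ₂, hδ₂, hδ₂δ₀, hgap⟩ := exists_gap_criticalEnergy hd' hδ₀
  refine ⟨δ₂, hδ₂, fun u₀ hu₀ hgrad hLp hE hge => ?_⟩
  rw [hWp, hCdW] at hE
  rw [hCdW] at hge ⊢
  have hN : 0 ≤ ∫ x, ‖u₀ x‖ ^ (2 * (d : ℝ) / (d - 2)) := integral_nonneg fun x => by positivity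
  refine ⟨one_add_mul_le_of_criticalEnergy_le hd' hCd hN hge (hsob u₀ hu₀ hgrad hLp) hE hgap, ?_⟩
  calc _ ≤ -(2 * δ₂) * Cd ^ (-(d : ℝ)) / (d - 2) :=
        sub_le_of_criticalEnergy_le hd' (by positivity) hge hδ₂δ₀ hE
    _ = -(2 * δ₂) / (((d : ℝ) - 2) * Cd ^ (d : ℝ)) := by
      rw [rpow_neg hCd.le]
      field_simp
end
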